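/- arXiv:1609.05833 — 3 statements merged into one kernel-verified Lean document; each statement's English description precedes it below -/
import Mathlib

section
/- Let E be a real vector space, (W_i)_{i∈I} a nonempty family of wedges in E and (x_i)_{i∈I} elements of E. Suppose the set of multi-suprema of (x_i, W_i)_{i∈I} is nonempty. Then this set is a singleton if and only if ⋂_{i∈I} W_i is a cone, i.e., (⋂_{i∈I} W_i) ∩ (−⋂_{i∈I} W_i) = {0}. -/
/-!
The multi-suprema of `(x i, W i)` form a translate `z + L` of the lineality space
`L = (⋂ i, W i) ∩ -(⋂ i, W i)`: two multi-suprema dominate each other in every `W i`, and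
adding an element of `L` to a multi-supremum keeps all inequalities. Since `0 ∈ L`, such a
translate is a singleton exactly when `L = {0}`.
-/

/-- A wedge in a real vector space: a nonempty subset closed under addition
and multiplication by nonnegative scalars. -/
def IsWedge {E : Type*} [AddCommGroup E] [Module ℝ E] (W : Set E) : Prop :=
  W.Nonempty ∧ (∀ x ∈ W, ∀ y ∈ W, x + y ∈ W) ∧ ∀ (c : ℝ), 0 ≤ c → ∀ x ∈ W, c • x ∈ W

/-- `u` is a multi-upper bound of the family `(x i, W i)`. -/
def IsMultiUpperBound {E ι : Type*} [AddCommGroup E] [Module ℝ E]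
    (x : ι → E) (W : ι → Set E) (u : E) : Prop :=
  ∀ i, u - x i ∈ W i

/-- `z` is a multi-supremum of the family `(x i, W i)`. -/
def IsMultiSup {E ι : Type*} [AddCommGroup E] [Module ℝ E]
    (x : ι → E) (W : ι → Set E) (z : E) : Prop :=
  IsMultiUpperBound x W z ∧ ∀ u, IsMultiUpperBound x W u → ∀ i, u - z ∈ W i

section

variable {E ι : Type*} [AddCommGroup E]

def lineality (W : ι → Set E) : Set E := (⋂ i, W i) ∩ -(⋂ i, W i)

lemma mem_lineality {W : ι → Set E} {v : E} : v ∈ lineality W ↔ ∀ i, v ∈ W i ∧ -v ∈ W i := by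
  simp [lineality, forall_and]

variable [Module ℝ E]

lemma IsWedge.zero_mem {W : Set E} (h : IsWedge W) : (0 : E) ∈ W := by
  obtain ⟨⟨w, hw⟩, -, hsmul⟩ := h
  simpa using hsmul 0 le_rfl w hw

lemma IsWedge.add_mem {W : Set E} (h : IsWedge W) {a b : E} (ha : a ∈ W) (hb : b ∈ W) :
    a + b ∈ W :=
  h.2.1 a ha b hb

lemma zero_mem_lineality {W : ι → Set E} (hW : ∀ i, IsWedge (W i)) : 0 ∈ lineality W :=
  mem_lineality.2 fun i => ⟨(hW i).zero_mem, by simpa using (hW i).zero_mem⟩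

namespace IsMultiSup

variable {x : ι → E} {W : ι → Set E} {z : E}

lemma sub_mem_lineality {w : E} (hz : IsMultiSup x W z) (hw : IsMultiSup x W w) :
    w - z ∈ lineality W :=
  mem_lineality.2 fun i => ⟨hz.2 w hw.1 i, by simpa using hw.2 z hz.1 i⟩

lemma add_mem_lineality (hW : ∀ i, IsWedge (W i)) (hz : IsMultiSup x W z) {v : E}
    (hv : v ∈ lineality W) : IsMultiSup x W (z + v) := by
  rw [mem_lineality] at hv
  refine ⟨fun i => ?_, fun u hu i => ?_⟩
  · simpa [add_sub_right_comm] using (hW i).add_mem (hz.1 i) (hv i).1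
  · rw [sub_add_eq_sub_sub, sub_eq_add_neg (u - z)]
    exact (hW i).add_mem (hz.2 u hu i) (hv i).2

lemma setOf_isMultiSup_eq (hW : ∀ i, IsWedge (W i)) (hz : IsMultiSup x W z) :
    {w | IsMultiSup x W w} = {w | w - z ∈ lineality W} := by
  ext w
  refine ⟨hz.sub_mem_lineality, fun hw => ?_⟩
  simpa using hz.add_mem_lineality hW hw

end IsMultiSup

end

lemma exists_setOf_sub_mem_eq_singleton_iff {G : Type*} [AddCommGroup G] {L : Set G}
    (h0 : (0 : G) ∈ L) (z : G) : (∃ z', {w | w - z ∈ L} = {z'}) ↔ L = {0} := by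
  constructor
  · rintro ⟨z', h⟩
    have hz : z = z' := by
      rw [← Set.mem_singleton_iff, ← h]
      simpa using h0
    subst hz
    refine Set.eq_singleton_iff_unique_mem.2 ⟨h0, fun v hv => ?_⟩
    have : z + v ∈ ({z} : Set G) := h ▸ show z + v - z ∈ L by rwa [add_sub_cancel_left]
    simpa using this
  · rintro rfl
    exact ⟨z, by ext w; simp [sub_eq_zero]⟩

theorem stmt_1_general {E ι : Type*} [AddCommGroup E] [Module ℝ E]
    (W : ι → Set E) (hW : ∀ i, IsWedge (W i)) (x : ι → E)
    (hne : {z | IsMultiSup x W z}.Nonempty) :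
    (∃ z, {w | IsMultiSup x W w} = {z}) ↔ (⋂ i, W i) ∩ (-(⋂ i, W i)) = {0} := by
  obtain ⟨z, hz⟩ := hne
  rw [hz.setOf_isMultiSup_eq hW]
  exact exists_setOf_sub_mem_eq_singleton_iff (zero_mem_lineality hW) z

theorem stmt_1 {E ι : Type*} [AddCommGroup E] [Module ℝ E] [Nonempty ι]
    (W : ι → Set E) (hW : ∀ i, IsWedge (W i)) (x : ι → E)
    (hne : {z | IsMultiSup x W z}.Nonempty) :
    (∃ z, {w | IsMultiSup x W w} = {z}) ↔ (⋂ i, W i) ∩ (-(⋂ i, W i)) = {0} :=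
  stmt_1_general W hW x hne
end

section
/- Let E be a real vector space, (W_i)_{i∈I} a nonempty family of wedges in E, (x_i)_{i∈I} elements of E, and z ∈ E. Then z is a multi-supremum of (x_i, W_i)_{i∈I} if and only if ⋂_{i∈I} (x_i + W_i) = z + ⋂_{i∈I} W_i (equality of subsets of E). -/
namespace IsWedge

variable {E : Type*} [AddCommGroup E] [Module ℝ E] {W : Set E}

theorem zero_mem_s4 (hW : IsWedge W) : (0 : E) ∈ W := by
  obtain ⟨⟨w, hw⟩, -, hsmul⟩ := hW
  simpa using hsmul 0 le_rfl w hw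

theorem add_mem_s4 (hW : IsWedge W) {a b : E} (ha : a ∈ W) (hb : b ∈ W) : a + b ∈ W :=
  hW.2.1 a ha b hb

end IsWedge

section MultiSup

variable {E ι : Type*} [AddCommGroup E] [Module ℝ E] {W : ι → Set E} {x : ι → E} {z : E}

theorem isMultiUpperBound_iff_mem_iInter {u : E} :
    IsMultiUpperBound x W u ↔ u ∈ ⋂ i, {w | w - x i ∈ W i} := by
  simp only [IsMultiUpperBound, Set.mem_iInter, Set.mem_ofPred_eq]

theorem IsMultiSup.iInter_eq (hadd : ∀ i, ∀ a ∈ W i, ∀ b ∈ W i, a + b ∈ W i)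
    (hz : IsMultiSup x W z) :
    (⋂ i, {w | w - x i ∈ W i}) = {w | w - z ∈ ⋂ i, W i} := by
  ext u
  rw [← isMultiUpperBound_iff_mem_iInter, Set.mem_ofPred_eq, Set.mem_iInter]
  refine ⟨hz.2 u, fun hu i => ?_⟩
  simpa only [sub_add_sub_cancel] using hadd i _ (hu i) _ (hz.1 i)

theorem isMultiSup_of_iInter_eq (hzero : ∀ i, (0 : E) ∈ W i)
    (h : (⋂ i, {w | w - x i ∈ W i}) = {w | w - z ∈ ⋂ i, W i}) : IsMultiSup x W z := by
  have hub {u : E} : IsMultiUpperBound x W u ↔ ∀ i, u - z ∈ W i := by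
    rw [isMultiUpperBound_iff_mem_iInter, h, Set.mem_ofPred_eq, Set.mem_iInter]
  exact ⟨hub.2 fun i => by simpa only [sub_self] using hzero i, fun _ hu => hub.1 hu⟩

end MultiSup

theorem stmt_4_general {E ι : Type*} [AddCommGroup E] [Module ℝ E]
    (W : ι → Set E) (hW : ∀ i, IsWedge (W i)) (x : ι → E) (z : E) :
    IsMultiSup x W z ↔ (⋂ i, {w | w - x i ∈ W i}) = {w | w - z ∈ ⋂ i, W i} :=
  ⟨IsMultiSup.iInter_eq fun i _ ha _ hb => (hW i).add_mem_s4 ha hb,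
    isMultiSup_of_iInter_eq fun i => (hW i).zero_mem_s4⟩

theorem stmt_4 {E ι : Type*} [AddCommGroup E] [Module ℝ E] [Nonempty ι]
    (W : ι → Set E) (hW : ∀ i, IsWedge (W i)) (x : ι → E) (z : E) :
    IsMultiSup x W z ↔ (⋂ i, {w | w - x i ∈ W i}) = {w | w - z ∈ ⋂ i, W i} :=
  stmt_4_general W hW x z
end

section
/- In E = ℝ², let W₁ = {(x,y) : x ≥ 0}, W₂ = {(x,y) : y ≥ 0} and W₃ = {(x,y) : y ≥ −x}. Then: (a) every multi-bounded above pair (x₁, U₁), (x₂, U₂) with U₁, U₂ ∈ {W₁, W₂, W₃} has a multi-supremum; but (b) the family ((0,0), W₁), ((0,0), W₂), ((1,1), W₃) is multi-bounded above and has no multi-supremum. -/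
/-- The right half-plane. -/
def Wone : Set (ℝ × ℝ) := {p | 0 ≤ p.1}

/-- The upper half-plane. -/
def Wtwo : Set (ℝ × ℝ) := {p | 0 ≤ p.2}

/-- The half-plane above the anti-diagonal. -/
def Wthree : Set (ℝ × ℝ) := {p | -p.1 ≤ p.2}

section HalfSpaces

variable {E : Type*} [AddCommGroup E] [Module ℝ E]

theorem exists_isMultiSup_pair_of_eq {f : E →ₗ[ℝ] ℝ} (hf : f ≠ 0) (x : Fin 2 → E)
    {U : Fin 2 → Set E} (hU : ∀ i, U i = {p | 0 ≤ f p}) : ∃ z, IsMultiSup x U z := by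
  obtain ⟨z, hz⟩ := LinearMap.surjective hf (max (f (x 0)) (f (x 1)))
  refine ⟨z, fun i => ?_, fun u hu i => ?_⟩
  · simp only [hU, Set.mem_ofPred_eq, map_sub, sub_nonneg, hz]
    fin_cases i
    exacts [le_max_left _ _, le_max_right _ _]
  · have hu0 := hu 0
    have hu1 := hu 1
    simp only [hU, Set.mem_ofPred_eq, map_sub, sub_nonneg] at hu0 hu1 ⊢
    exact hz ▸ max_le hu0 hu1

theorem exists_isMultiSup_pair_of_surjective_prod {f g : E →ₗ[ℝ] ℝ}
    (hfg : Function.Surjective (f.prod g)) (x : Fin 2 → E) {U : Fin 2 → Set E}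
    (hU0 : U 0 = {p | 0 ≤ f p}) (hU1 : U 1 = {p | 0 ≤ g p}) : ∃ z, IsMultiSup x U z := by
  obtain ⟨z, hz⟩ := hfg (f (x 0), g (x 1))
  have hfz : f z = f (x 0) := congr_arg Prod.fst hz
  have hgz : g z = g (x 1) := congr_arg Prod.snd hz
  refine ⟨z, fun i => ?_, fun u hu i => ?_⟩
  · fin_cases i <;> simp [hU0, hU1, hfz, hgz]
  · have hu0 := hu 0
    have hu1 := hu 1
    simp only [hU0, hU1, Set.mem_ofPred_eq, map_sub, sub_nonneg] at hu0 hu1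
    fin_cases i <;> simpa [hU0, hU1, hfz, hgz]

end HalfSpaces

theorem LinearMap.surjective_prod_of_det_ne_zero {f g : ℝ × ℝ →ₗ[ℝ] ℝ}
    (h : f (1, 0) * g (0, 1) - f (0, 1) * g (1, 0) ≠ 0) : Function.Surjective (f.prod g) := by
  rintro ⟨a, b⟩
  have hdecomp : ∀ s t : ℝ, ((s, t) : ℝ × ℝ) = s • (1, 0) + t • (0, 1) := by simp
  set d := f (1, 0) * g (0, 1) - f (0, 1) * g (1, 0)
  refine ⟨((a * g (0, 1) - b * f (0, 1)) / d, (b * f (1, 0) - a * g (1, 0)) / d), ?_⟩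
  rw [LinearMap.prod_apply, hdecomp]
  simp only [Function.prod, map_add, map_smul, smul_eq_mul, Prod.mk.injEq]
  constructor <;> field_simp <;> ring

open LinearMap in
def halfPlaneFunctionals : Set (ℝ × ℝ →ₗ[ℝ] ℝ) := {fst ℝ ℝ ℝ, snd ℝ ℝ ℝ, fst ℝ ℝ ℝ + snd ℝ ℝ ℝ}

theorem exists_mem_halfPlaneFunctionals {U : Set (ℝ × ℝ)}
    (hU : U ∈ ({Wone, Wtwo, Wthree} : Set (Set (ℝ × ℝ)))) :
    ∃ f ∈ halfPlaneFunctionals, U = {p | 0 ≤ f p} := by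
  rcases hU with rfl | rfl | rfl
  · exact ⟨_, Or.inl rfl, rfl⟩
  · exact ⟨_, Or.inr (Or.inl rfl), rfl⟩
  · refine ⟨_, Or.inr (Or.inr rfl), ?_⟩
    ext p
    simp [Wthree, neg_le_iff_add_nonneg']

theorem ne_zero_of_mem_halfPlaneFunctionals {f : ℝ × ℝ →ₗ[ℝ] ℝ}
    (hf : f ∈ halfPlaneFunctionals) : f ≠ 0 := by
  rintro rfl
  rcases hf with h | h | h <;>
    · have h11 := LinearMap.congr_fun h (1, 1)
      norm_num at h11

theorem det_ne_zero_of_mem_halfPlaneFunctionals {f g : ℝ × ℝ →ₗ[ℝ] ℝ}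
    (hf : f ∈ halfPlaneFunctionals) (hg : g ∈ halfPlaneFunctionals) (hfg : f ≠ g) :
    f (1, 0) * g (0, 1) - f (0, 1) * g (1, 0) ≠ 0 := by
  rcases hf with rfl | rfl | rfl <;> rcases hg with rfl | rfl | rfl <;> simp_all

theorem isMultiUpperBound_counterexample_iff (u : ℝ × ℝ) :
    IsMultiUpperBound ![((0 : ℝ), (0 : ℝ)), (0, 0), (1, 1)] ![Wone, Wtwo, Wthree] u ↔
      0 ≤ u.1 ∧ 0 ≤ u.2 ∧ 2 ≤ u.1 + u.2 := by
  simp [IsMultiUpperBound, Fin.forall_fin_succ, Wone, Wtwo, Wthree]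
  grind

theorem stmt_6 :
    (∀ (x : Fin 2 → ℝ × ℝ) (U : Fin 2 → Set (ℝ × ℝ)),
      (∀ i, U i ∈ ({Wone, Wtwo, Wthree} : Set (Set (ℝ × ℝ)))) →
      (∃ u, IsMultiUpperBound x U u) → ∃ z, IsMultiSup x U z) ∧
    (∃ u, IsMultiUpperBound ![((0 : ℝ), (0 : ℝ)), (0, 0), (1, 1)] ![Wone, Wtwo, Wthree] u) ∧
    ¬∃ z, IsMultiSup ![((0 : ℝ), (0 : ℝ)), (0, 0), (1, 1)] ![Wone, Wtwo, Wthree] z := by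
  refine ⟨fun x U hU _ => ?_, ⟨(1, 1), ?_⟩, ?_⟩
  · obtain ⟨f, hf, hUf⟩ := exists_mem_halfPlaneFunctionals (hU 0)
    obtain ⟨g, hg, hUg⟩ := exists_mem_halfPlaneFunctionals (hU 1)
    by_cases hfg : f = g
    · subst hfg
      exact exists_isMultiSup_pair_of_eq (ne_zero_of_mem_halfPlaneFunctionals hf) x
        (Fin.forall_fin_two.2 ⟨hUf, hUg⟩)
    · have hdet := det_ne_zero_of_mem_halfPlaneFunctionals hf hg hfg
      exact exists_isMultiSup_pair_of_surjective_prod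
        (LinearMap.surjective_prod_of_det_ne_zero hdet) x hUf hUg
  · rw [isMultiUpperBound_counterexample_iff]
    norm_num
  · rintro ⟨z, hz, hle⟩
    rw [isMultiUpperBound_counterexample_iff] at hz
    have hz₂ : z.2 ≤ 0 := by
      simpa [Wtwo] using hle (2, 0) ((isMultiUpperBound_counterexample_iff _).2 (by norm_num)) 1
    have hz₁ : z.1 ≤ 0 := by
      simpa [Wone] using hle (0, 2) ((isMultiUpperBound_counterexample_iff _).2 (by norm_num)) 0
    linarith [hz.2.2]
end
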